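/- Let M₁, M₂ be closed subspaces of a Hilbert space H, M = M₁ ∩ M₂, and let c(M₁,M₂) = sup{ |⟨x,y⟩| : x ∈ M₁ ∩ M^⊥, y ∈ M₂ ∩ M^⊥, ‖x‖ ≤ 1, ‖y‖ ≤ 1 } be the cosine of the Friedrichs angle. Then for every x ∈ H and every n ≥ 1, ‖(P_{M₂}P_{M₁})ⁿ(x) − P_M(x)‖ ≤ c(M₁,M₂)^{2n−1}·‖x‖. -/

import Mathlib

open scoped InnerProductSpace

noncomputable def proj {𝕜 H : Type*} [RCLike 𝕜] [NormedAddCommGroup H]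
    [InnerProductSpace 𝕜 H] (S : Submodule 𝕜 H) [CompleteSpace S] : H →L[𝕜] H :=
  S.subtypeL.comp S.orthogonalProjectionOnto

/-- The cosine of the Friedrichs angle between two subspaces. -/
noncomputable def fcos {𝕜 H : Type*} [RCLike 𝕜] [NormedAddCommGroup H]
    [InnerProductSpace 𝕜 H] (M₁ M₂ : Submodule 𝕜 H) : ℝ :=
  sSup {r : ℝ | ∃ x ∈ M₁ ⊓ (M₁ ⊓ M₂)ᗮ, ∃ y ∈ M₂ ⊓ (M₁ ⊓ M₂)ᗮ,
    ‖x‖ ≤ 1 ∧ ‖y‖ ≤ 1 ∧ r = ‖(⟪x, y⟫_𝕜 : 𝕜)‖}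

/-!
Write `T = P_{M₂} P_{M₁}` and `M = M₁ ⊓ M₂`. Since `T` fixes `M`, `Tⁿ x - P_M x = Tⁿ y` with
`y = x - P_M x ∈ Mᗮ`, and `T` maps `Mᗮ` into `M₂ ⊓ Mᗮ`. For `u ∈ M₁ ⊓ Mᗮ` the projection
`P_{M₂} u` lies in `M₂ ⊓ Mᗮ`, so `‖P_{M₂} u‖² = Re ⟪P_{M₂} u, u⟫ ≤ c ‖u‖ ‖P_{M₂} u‖`: the projection
`P_{M₂}` contracts `M₁ ⊓ Mᗮ` by the factor `c`, and symmetrically `P_{M₁}` contracts `M₂ ⊓ Mᗮ`.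
Hence the first application of `T` to `y` gains one factor `c` and every later one gains `c²`.
-/

section

variable {𝕜 H : Type*} [RCLike 𝕜] [NormedAddCommGroup H] [InnerProductSpace 𝕜 H]

theorem proj_eq_starProjection (S : Submodule 𝕜 H) [CompleteSpace S] :
    proj S = S.starProjection :=
  rfl

theorem Submodule.starProjection_mem_inf_orthogonal_of_le (S : Submodule 𝕜 H)
    [S.HasOrthogonalProjection] {M : Submodule 𝕜 H} (hMS : M ≤ S) {z : H} (hz : z ∈ Mᗮ) :
    S.starProjection z ∈ S ⊓ Mᗮ := by
  refine ⟨S.starProjection_apply_mem z, fun m hm => ?_⟩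
  rw [← Submodule.inner_starProjection_left_eq_right, S.starProjection_eq_self_iff.mpr (hMS hm)]
  exact hz m hm

theorem Submodule.norm_starProjection_le_of_norm_inner_le (K : Submodule 𝕜 H)
    [K.HasOrthogonalProjection] {c : ℝ} (hc : 0 ≤ c) {u : H}
    (h : ‖⟪u, K.starProjection u⟫_𝕜‖ ≤ c * ‖u‖ * ‖K.starProjection u‖) :
    ‖K.starProjection u‖ ≤ c * ‖u‖ := by
  have hsq : ‖K.starProjection u‖ ^ 2 ≤ c * ‖u‖ * ‖K.starProjection u‖ := by
    calc ‖K.starProjection u‖ ^ 2 = RCLike.re ⟪K.starProjection u, u⟫_𝕜 :=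
          (K.re_inner_starProjection_eq_normSq u).symm
      _ ≤ ‖⟪u, K.starProjection u⟫_𝕜‖ := by
          rw [norm_inner_symm]; exact RCLike.re_le_norm _
      _ ≤ c * ‖u‖ * ‖K.starProjection u‖ := h
  rcases (norm_nonneg (K.starProjection u)).eq_or_lt with h0 | hpos
  · rw [← h0]; positivity
  · exact le_of_mul_le_mul_right (by rwa [sq] at hsq) hpos

theorem fcos_set_bddAbove (M₁ M₂ : Submodule 𝕜 H) :
    BddAbove {r : ℝ | ∃ x ∈ M₁ ⊓ (M₁ ⊓ M₂)ᗮ, ∃ y ∈ M₂ ⊓ (M₁ ⊓ M₂)ᗮ,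
      ‖x‖ ≤ 1 ∧ ‖y‖ ≤ 1 ∧ r = ‖(⟪x, y⟫_𝕜 : 𝕜)‖} := by
  refine ⟨1, ?_⟩
  rintro r ⟨x, -, y, -, hx, hy, rfl⟩
  calc ‖⟪x, y⟫_𝕜‖ ≤ ‖x‖ * ‖y‖ := norm_inner_le_norm x y
    _ ≤ 1 := mul_le_one₀ hx (norm_nonneg y) hy

theorem fcos_nonneg (M₁ M₂ : Submodule 𝕜 H) : 0 ≤ fcos M₁ M₂ :=
  le_csSup (fcos_set_bddAbove M₁ M₂) ⟨0, zero_mem _, 0, zero_mem _, by simp, by simp, by simp⟩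

theorem norm_inner_le_fcos_mul {M₁ M₂ : Submodule 𝕜 H} {u v : H}
    (hu : u ∈ M₁ ⊓ (M₁ ⊓ M₂)ᗮ) (hv : v ∈ M₂ ⊓ (M₁ ⊓ M₂)ᗮ) :
    ‖⟪u, v⟫_𝕜‖ ≤ fcos M₁ M₂ * ‖u‖ * ‖v‖ := by
  rcases eq_or_ne u 0 with rfl | hu0
  · simp
  rcases eq_or_ne v 0 with rfl | hv0
  · simp
  have hunit : ‖⟪(‖u‖⁻¹ : 𝕜) • u, (‖v‖⁻¹ : 𝕜) • v⟫_𝕜‖ ≤ fcos M₁ M₂ :=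
    le_csSup (fcos_set_bddAbove M₁ M₂) ⟨_, Submodule.smul_mem _ _ hu, _,
      Submodule.smul_mem _ _ hv, (norm_smul_inv_norm hu0).le, (norm_smul_inv_norm hv0).le, rfl⟩
  have hscale : ‖⟪(‖u‖⁻¹ : 𝕜) • u, (‖v‖⁻¹ : 𝕜) • v⟫_𝕜‖ = ‖⟪u, v⟫_𝕜‖ / (‖u‖ * ‖v‖) := by
    simp only [inner_smul_left, inner_smul_right, norm_mul, RCLike.norm_conj, norm_inv,
      RCLike.norm_ofReal, abs_norm]
    field_simp
  rw [hscale, div_le_iff₀ (by positivity)] at hunit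
  linarith

theorem fcos_comm (M₁ M₂ : Submodule 𝕜 H) : fcos M₂ M₁ = fcos M₁ M₂ := by
  unfold fcos
  rw [inf_comm M₂ M₁]
  congr 1
  ext r
  constructor <;>
  · rintro ⟨x, hx, y, hy, hx1, hy1, rfl⟩
    exact ⟨y, hy, x, hx, hy1, hx1, norm_inner_symm x y⟩

section AlternatingProjections

variable {M₁ M₂ : Submodule 𝕜 H}

theorem norm_starProjection_le_fcos_mul_of_mem_left [M₂.HasOrthogonalProjection] {u : H}
    (hu : u ∈ M₁ ⊓ (M₁ ⊓ M₂)ᗮ) : ‖M₂.starProjection u‖ ≤ fcos M₁ M₂ * ‖u‖ :=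
  M₂.norm_starProjection_le_of_norm_inner_le (fcos_nonneg M₁ M₂) <|
    norm_inner_le_fcos_mul hu (M₂.starProjection_mem_inf_orthogonal_of_le inf_le_right hu.2)

theorem norm_starProjection_le_fcos_mul_of_mem_right [M₁.HasOrthogonalProjection] {v : H}
    (hv : v ∈ M₂ ⊓ (M₁ ⊓ M₂)ᗮ) : ‖M₁.starProjection v‖ ≤ fcos M₁ M₂ * ‖v‖ := by
  rw [← fcos_comm]
  rw [inf_comm M₁ M₂] at hv
  exact norm_starProjection_le_fcos_mul_of_mem_left hv

variable [M₁.HasOrthogonalProjection] [M₂.HasOrthogonalProjection]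

theorem starProjection_comp_mem_inf_orthogonal {y : H} (hy : y ∈ (M₁ ⊓ M₂)ᗮ) :
    (M₂.starProjection ∘L M₁.starProjection) y ∈ M₂ ⊓ (M₁ ⊓ M₂)ᗮ :=
  M₂.starProjection_mem_inf_orthogonal_of_le inf_le_right
    (M₁.starProjection_mem_inf_orthogonal_of_le inf_le_left hy).2

theorem norm_starProjection_comp_le_fcos_mul {y : H} (hy : y ∈ (M₁ ⊓ M₂)ᗮ) :
    ‖(M₂.starProjection ∘L M₁.starProjection) y‖ ≤ fcos M₁ M₂ * ‖y‖ :=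
  calc ‖M₂.starProjection (M₁.starProjection y)‖
      ≤ fcos M₁ M₂ * ‖M₁.starProjection y‖ := norm_starProjection_le_fcos_mul_of_mem_left
        (M₁.starProjection_mem_inf_orthogonal_of_le inf_le_left hy)
    _ ≤ fcos M₁ M₂ * ‖y‖ :=
        mul_le_mul_of_nonneg_left (M₁.norm_starProjection_apply_le y) (fcos_nonneg M₁ M₂)

theorem norm_starProjection_comp_le_fcos_sq_mul {v : H} (hv : v ∈ M₂ ⊓ (M₁ ⊓ M₂)ᗮ) :
    ‖(M₂.starProjection ∘L M₁.starProjection) v‖ ≤ fcos M₁ M₂ ^ 2 * ‖v‖ :=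
  calc ‖M₂.starProjection (M₁.starProjection v)‖
      ≤ fcos M₁ M₂ * ‖M₁.starProjection v‖ := norm_starProjection_le_fcos_mul_of_mem_left
        (M₁.starProjection_mem_inf_orthogonal_of_le inf_le_left hv.2)
    _ ≤ fcos M₁ M₂ * (fcos M₁ M₂ * ‖v‖) :=
        mul_le_mul_of_nonneg_left (norm_starProjection_le_fcos_mul_of_mem_right hv)
          (fcos_nonneg M₁ M₂)
    _ = fcos M₁ M₂ ^ 2 * ‖v‖ := by ring

theorem norm_starProjection_comp_pow_le_of_mem_inf_orthogonal {v : H}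
    (hv : v ∈ M₂ ⊓ (M₁ ⊓ M₂)ᗮ) (k : ℕ) :
    ‖((M₂.starProjection ∘L M₁.starProjection) ^ k) v‖ ≤ fcos M₁ M₂ ^ (2 * k) * ‖v‖ := by
  induction k generalizing v with
  | zero => simp
  | succ k ih =>
    rw [pow_succ, mul_apply_eq_comp]
    calc _ ≤ fcos M₁ M₂ ^ (2 * k) * ‖(M₂.starProjection ∘L M₁.starProjection) v‖ :=
          ih (starProjection_comp_mem_inf_orthogonal hv.2)
      _ ≤ fcos M₁ M₂ ^ (2 * k) * (fcos M₁ M₂ ^ 2 * ‖v‖) :=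
          mul_le_mul_of_nonneg_left (norm_starProjection_comp_le_fcos_sq_mul hv)
            (pow_nonneg (fcos_nonneg M₁ M₂) _)
      _ = fcos M₁ M₂ ^ (2 * (k + 1)) * ‖v‖ := by ring

theorem norm_starProjection_comp_pow_le_of_mem_orthogonal {y : H}
    (hy : y ∈ (M₁ ⊓ M₂)ᗮ) (n : ℕ) :
    ‖((M₂.starProjection ∘L M₁.starProjection) ^ n) y‖ ≤ fcos M₁ M₂ ^ (2 * n - 1) * ‖y‖ := by
  cases n with
  | zero => simp
  | succ k =>
    rw [pow_succ, mul_apply_eq_comp]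
    calc _ ≤ fcos M₁ M₂ ^ (2 * k) * ‖(M₂.starProjection ∘L M₁.starProjection) y‖ :=
          norm_starProjection_comp_pow_le_of_mem_inf_orthogonal
            (starProjection_comp_mem_inf_orthogonal hy) k
      _ ≤ fcos M₁ M₂ ^ (2 * k) * (fcos M₁ M₂ * ‖y‖) :=
          mul_le_mul_of_nonneg_left (norm_starProjection_comp_le_fcos_mul hy)
            (pow_nonneg (fcos_nonneg M₁ M₂) _)
      _ = fcos M₁ M₂ ^ (2 * (k + 1) - 1) * ‖y‖ := by
          rw [show 2 * (k + 1) - 1 = 2 * k + 1 by omega]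
          ring

theorem starProjection_comp_pow_apply_of_mem_inf {z : H} (hz : z ∈ M₁ ⊓ M₂) (n : ℕ) :
    ((M₂.starProjection ∘L M₁.starProjection) ^ n) z = z := by
  rw [pow_apply_eq_iterate]
  refine Function.iterate_fixed ?_ n
  simp [M₁.starProjection_eq_self_iff.mpr hz.1, M₂.starProjection_eq_self_iff.mpr hz.2]

end AlternatingProjections

end

theorem aronszajn_rate_general {𝕜 H : Type*} [RCLike 𝕜] [NormedAddCommGroup H]
    [InnerProductSpace 𝕜 H] (M₁ M₂ : Submodule 𝕜 H)
    [CompleteSpace M₁] [CompleteSpace M₂] [CompleteSpace (M₁ ⊓ M₂ : Submodule 𝕜 H)]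
    (x : H) (n : ℕ) :
    ‖(((proj M₂).comp (proj M₁)) ^ n) x - proj (M₁ ⊓ M₂) x‖
      ≤ fcos M₁ M₂ ^ (2 * n - 1) * ‖x‖ := by
  simp only [proj_eq_starProjection]
  set P := (M₁ ⊓ M₂).starProjection
  have hsplit : ((M₂.starProjection ∘L M₁.starProjection) ^ n) x - P x =
      ((M₂.starProjection ∘L M₁.starProjection) ^ n) (x - P x) := by
    rw [map_sub, starProjection_comp_pow_apply_of_mem_inf ((M₁ ⊓ M₂).starProjection_apply_mem x)]
  calc _ = ‖((M₂.starProjection ∘L M₁.starProjection) ^ n) (x - P x)‖ := by rw [hsplit]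
    _ ≤ fcos M₁ M₂ ^ (2 * n - 1) * ‖x - P x‖ := norm_starProjection_comp_pow_le_of_mem_orthogonal
        ((M₁ ⊓ M₂).sub_starProjection_mem_orthogonal x) n
    _ ≤ fcos M₁ M₂ ^ (2 * n - 1) * ‖x‖ := by
        rw [← Submodule.starProjection_orthogonal_val]
        exact mul_le_mul_of_nonneg_left ((M₁ ⊓ M₂)ᗮ.norm_starProjection_apply_le x)
          (pow_nonneg (fcos_nonneg M₁ M₂) _)

/-- Aronszajn: `‖(P_{M₂}P_{M₁})ⁿ x − P_M x‖ ≤ c(M₁,M₂)^(2n−1) ‖x‖`. -/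
theorem aronszajn_rate {𝕜 H : Type*} [RCLike 𝕜] [NormedAddCommGroup H]
    [InnerProductSpace 𝕜 H] [CompleteSpace H] (M₁ M₂ : Submodule 𝕜 H)
    [CompleteSpace M₁] [CompleteSpace M₂] [CompleteSpace (M₁ ⊓ M₂ : Submodule 𝕜 H)]
    (x : H) (n : ℕ) (hn : 1 ≤ n) :
    ‖(((proj M₂).comp (proj M₁)) ^ n) x - proj (M₁ ⊓ M₂) x‖
      ≤ fcos M₁ M₂ ^ (2 * n - 1) * ‖x‖ :=
  aronszajn_rate_general M₁ M₂ x n
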